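/- arXiv:1605.01289 — 2 statements merged into one kernel-verified Lean document; each statement's English description precedes it below -/
import Mathlib

section
/- Let A be an abelian group and Γ a finite connected non-oriented bipartite graph with vertex set V = V₁ ⊔ V₂ and edge set E. For v ∈ V denote by I(v) the set of edges of Γ incident to v. If (a_v)_{v∈V} is a family of elements of A satisfying ∑_{v∈V₁} a_v = ∑_{v∈V₂} a_v, then there exists a family (x_e)_{e∈E} of elements of A such that for every vertex v ∈ V one has ∑_{e∈I(v)} x_e = a_v. -/
/-!
Write `∂x` for the vertex function `v ↦ ∑_{e ∋ v} x e`; its image is a subgroup. An edge `uw`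
carrying `c` has `∂ = δ_u c + δ_w c`, so placing `±c` alternately along a walk from `u` to `w`
gives `δ_u c - δ_w (±c)`, with `+` exactly when `u` and `w` lie on the same side. Connecting
every vertex to a fixed `v₀` writes `a` as an element of the image plus
`δ_{v₀} (±(∑_{V₁} a - ∑_{V₂} a))`, and the last term vanishes.
-/

open scoped Classical

lemma sum_ite_side_eq_zero {V A : Type*} [Fintype V] [AddCommGroup A] (side : V → Bool) (a : V → A)
    (hsum : ∑ v ∈ Finset.univ.filter (fun v => side v = true), a v
          = ∑ v ∈ Finset.univ.filter (fun v => side v = false), a v) (b : Bool) :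
    ∑ v, (if side v = b then a v else -a v) = 0 := by
  rw [Finset.sum_ite, Finset.sum_neg_distrib]
  cases b <;> simp [hsum]

namespace SimpleGraph

variable {V A : Type*} [Fintype V] [AddCommGroup A] (G : SimpleGraph V)

noncomputable def incidenceSum : (G.edgeSet → A) →+ (V → A) :=
  AddMonoidHom.mk' (fun x v => ∑ e ∈ Finset.univ.filter (fun e : G.edgeSet => v ∈ (e : Sym2 V)), x e)
    fun x y => by ext v; simp [Finset.sum_add_distrib]

lemma incidenceSum_apply (x : G.edgeSet → A) (v : V) :
    G.incidenceSum x v = ∑ e ∈ Finset.univ.filter (fun e : G.edgeSet => v ∈ (e : Sym2 V)), x e :=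
  rfl

lemma incidenceSum_single (e : G.edgeSet) (c : A) (v : V) :
    G.incidenceSum (Pi.single e c) v = if v ∈ (e : Sym2 V) then c else 0 := by
  simp [incidenceSum_apply, Finset.sum_pi_single']

variable {G}

lemma single_add_single_mem_range_incidenceSum {u w : V} (h : G.Adj u w) (c : A) :
    Pi.single u c + Pi.single w c ∈ (G.incidenceSum (A := A)).range := by
  refine ⟨Pi.single ⟨s(u, w), h⟩ c, funext fun v => ?_⟩
  rw [incidenceSum_single]
  rcases eq_or_ne v u with rfl | hvu
  · simp [h.ne]
  · rcases eq_or_ne v w with rfl | hvw <;> simp [*]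

lemma Walk.single_sub_single_mem_range_incidenceSum (side : V → Bool)
    (hbip : ∀ ⦃v w : V⦄, G.Adj v w → side v ≠ side w) {u w : V} (p : G.Walk u w) (c : A) :
    Pi.single u c - Pi.single w (if side u = side w then c else -c)
      ∈ (G.incidenceSum (A := A)).range := by
  induction p generalizing c with
  | nil => simp
  | @cons u u' w h p ih =>
    have hside : (side u' = side w) ↔ ¬(side u = side w) := by
      have := hbip h; revert this; cases side u <;> cases side u' <;> cases side w <;> simp
    convert add_mem (single_add_single_mem_range_incidenceSum h c) (ih (-c)) using 1
    by_cases huw : side u = side w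
    · simp only [huw, hside, if_true, not_true_eq_false, if_false, Pi.single_neg]; abel
    · simp only [huw, hside, if_false, not_false_eq_true, if_true, Pi.single_neg, neg_neg]; abel

theorem mem_range_incidenceSum (hconn : G.Connected) (side : V → Bool)
    (hbip : ∀ ⦃v w : V⦄, G.Adj v w → side v ≠ side w) (a : V → A)
    (hsum : ∑ v ∈ Finset.univ.filter (fun v => side v = true), a v
          = ∑ v ∈ Finset.univ.filter (fun v => side v = false), a v) :
    a ∈ (G.incidenceSum (A := A)).range := by
  obtain ⟨v₀⟩ := hconn.nonempty
  set f : V → A := fun v => if side v = side v₀ then a v else -a v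
  have hcorr : ∑ v, Pi.single v₀ (f v) = (0 : V → A) := by
    rw [← Pi.single_zero v₀, ← sum_ite_side_eq_zero side a hsum (side v₀)]
    exact (map_sum (AddMonoidHom.single (fun _ : V => A) v₀) f Finset.univ).symm
  have hdecomp : a = ∑ v, (Pi.single v (a v) - Pi.single v₀ (f v)) := by
    rw [Finset.sum_sub_distrib, Finset.univ_sum_single, hcorr, sub_zero]
  rw [hdecomp]
  exact AddSubgroup.sum_mem _ fun v _ =>
    (hconn v v₀).some.single_sub_single_mem_range_incidenceSum side hbip (a v)

end SimpleGraph

/-- **Lemme 1.1.** Let `A` be an abelian group and `Γ` a finite connected non-oriented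
bipartite graph with vertex set `V = V₁ ⊔ V₂` (encoded by `side : V → Bool`) and edge set `E`.
If `(a_v)` satisfies `∑_{v ∈ V₁} a_v = ∑_{v ∈ V₂} a_v`, then there is a family `(x_e)_{e ∈ E}`
with `∑_{e ∈ I(v)} x_e = a_v` for every vertex `v`. -/
theorem stmt_0 {A : Type*} [AddCommGroup A] {V : Type*} [Fintype V]
    (G : SimpleGraph V) (hconn : G.Connected)
    (side : V → Bool)
    (hbip : ∀ ⦃v w : V⦄, G.Adj v w → side v ≠ side w)
    (a : V → A)
    (hsum : ∑ v ∈ Finset.univ.filter (fun v => side v = true), a v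
          = ∑ v ∈ Finset.univ.filter (fun v => side v = false), a v) :
    ∃ x : G.edgeSet → A, ∀ v : V,
      ∑ e ∈ Finset.univ.filter (fun e : G.edgeSet => v ∈ (e : Sym2 V)), x e = a v := by
  obtain ⟨x, hx⟩ := G.mem_range_incidenceSum hconn side hbip a hsum
  exact ⟨x, congrFun hx⟩
end

section
/- Let A be an abelian group and Γ a finite connected bipartite graph with vertex set V = V₁ ⊔ V₂ and edge set E. Let Θ_A(Γ) be the subgroup of the direct sum ⊕_{e∈E} A consisting of the families (x_e)_{e∈E} such that for every vertex v ∈ V the sum of x_e over the set of edges incident to v is zero. If e₀ ∈ E is an edge such that the subgraph of Γ obtained by deleting the edge e₀ is still connected, then the restriction to Θ_A(Γ) of the projection p_{e₀} : ⊕_{e∈E} A → A onto the coordinate indexed by e₀ is a surjective group homomorphism that admits a group-theoretic section (it is split surjective). -/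
/-!
Send `b ∈ A` to the alternating chain `b, -b, b, …` along a closed walk `c` whose first edge is
`e₀`: at every vertex the contributions of consecutive edges cancel, and at the base point the
first and last edge cancel because `c` has even length (the graph is bipartite). Since deleting
`e₀` keeps its endpoints connected, the rest of `c` can be chosen to avoid `e₀`; then the chain
has `e₀`-coordinate `b`, so `b ↦ chain` is a section of `p_{e₀}`.
-/

open scoped Classical

/-- The subgroup `Θ_A(Γ)` of `⊕_{e ∈ E} A` consisting of the families `(x_e)` whose sum over
the edges incident to each vertex vanishes. -/
noncomputable def Theta (A : Type*) [AddCommGroup A] {V : Type*} [Fintype V]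
    (G : SimpleGraph V) : AddSubgroup (G.edgeSet → A) where
  carrier := {x | ∀ v : V,
    ∑ e ∈ Finset.univ.filter (fun e : G.edgeSet => v ∈ (e : Sym2 V)), x e = 0}
  zero_mem' := by intro v; simp
  add_mem' := by
    intro x y hx hy v
    simp only [Set.mem_setOf_eq, Pi.add_apply] at *
    rw [Finset.sum_add_distrib, hx v, hy v, add_zero]
  neg_mem' := by
    intro x hx v
    simp only [Set.mem_setOf_eq, Pi.neg_apply] at *
    rw [Finset.sum_neg_distrib, hx v, neg_zero]

namespace SimpleGraph

variable {V A : Type*} [AddCommGroup A] {G : SimpleGraph V}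

namespace Walk

noncomputable def alternatingChain : ∀ {u v : V}, G.Walk u v → A →+ (G.edgeSet → A)
  | _, _, nil => 0
  | _, _, cons h p =>
    AddMonoidHom.single (fun _ => A) (⟨s(_, _), G.mem_edgeSet.2 h⟩ : G.edgeSet) - p.alternatingChain

@[simp] lemma alternatingChain_nil {u : V} :
    (nil : G.Walk u u).alternatingChain = (0 : A →+ (G.edgeSet → A)) := rfl

@[simp] lemma alternatingChain_cons {u v w : V} (h : G.Adj u v) (p : G.Walk v w) :
    (cons h p).alternatingChain =
      AddMonoidHom.single (fun _ => A) ⟨_, G.mem_edgeSet.2 h⟩ - p.alternatingChain := rfl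

lemma alternatingChain_apply_of_notMem {u v : V} (p : G.Walk u v) {e : G.edgeSet}
    (he : e.1 ∉ p.edges) (b : A) : p.alternatingChain b e = 0 := by
  induction p with
  | nil => rfl
  | cons h p ih =>
    rw [edges_cons, List.mem_cons, not_or] at he
    have hne : e ≠ ⟨_, G.mem_edgeSet.2 h⟩ := fun h' => he.1 (congrArg Subtype.val h')
    simp [hne, ih he.2]

lemma alternatingChain_cons_apply_self {u v w : V} (h : G.Adj u v) (p : G.Walk v w)
    (hp : s(u, v) ∉ p.edges) (b : A) :
    (cons h p).alternatingChain b ⟨_, G.mem_edgeSet.2 h⟩ = b := by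
  simp [p.alternatingChain_apply_of_notMem (e := ⟨_, G.mem_edgeSet.2 h⟩) hp]

end Walk

lemma exists_closed_walk_alternatingChain_apply_self (e : G.edgeSet)
    (he : (G.deleteEdges {e.1}).Preconnected) :
    ∃ (u : V) (c : G.Walk u u), ∀ b : A, c.alternatingChain b e = b := by
  obtain ⟨e, hmem⟩ := e
  induction e using Sym2.ind with
  | _ x y =>
  obtain ⟨q⟩ := he y x
  have hq : s(x, y) ∉ q.edges := fun h => by simpa using q.edges_subset_edgeSet h
  refine ⟨x, .cons hmem (q.mapLe (G.deleteEdges_le _)), fun b => ?_⟩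
  exact Walk.alternatingChain_cons_apply_self hmem _ (by rwa [Walk.edges_mapLe_eq_edges]) b

variable [Fintype V]

lemma sum_incident_single (w : V) (e₀ : G.edgeSet) (b : A) :
    ∑ e ∈ Finset.univ.filter (fun e : G.edgeSet => w ∈ (e : Sym2 V)), Pi.single e₀ b e =
      if w ∈ (e₀ : Sym2 V) then b else 0 := by
  simp [Pi.single_apply]

namespace Walk

lemma sum_incident_alternatingChain {u v : V} (p : G.Walk u v) (b : A) (w : V) :
    ∑ e ∈ Finset.univ.filter (fun e : G.edgeSet => w ∈ (e : Sym2 V)), p.alternatingChain b e =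
      (if w = u then b else 0) - ((-1 : ℤ) ^ p.length) • (if w = v then b else 0) := by
  induction p with
  | nil => simp
  | @cons u x v h p ih =>
    simp only [alternatingChain_cons, AddMonoidHom.sub_apply, Pi.sub_apply, Finset.sum_sub_distrib,
      AddMonoidHom.single_apply, sum_incident_single, ih, length_cons, pow_succ, mul_neg_one,
      neg_smul, Sym2.mem_iff]
    by_cases hwu : w = u
    · subst hwu
      simp [h.ne]
    · by_cases hwx : w = x <;> simp [hwu, hwx, h.ne.symm]

lemma alternatingChain_mem_Theta {u : V} (c : G.Walk u u) (hc : Even c.length) (b : A) :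
    c.alternatingChain b ∈ Theta A G := fun w => by
  rw [sum_incident_alternatingChain, hc.neg_one_pow, one_smul, sub_self]

end Walk

end SimpleGraph

theorem stmt_1_general {A : Type*} [AddCommGroup A] {V : Type*} [Fintype V]
    (G : SimpleGraph V)
    (side : V → Bool)
    (hbip : ∀ ⦃v w : V⦄, G.Adj v w → side v ≠ side w)
    (e₀ : G.edgeSet)
    (hdel : (G.deleteEdges {(e₀ : Sym2 V)}).Connected) :
    Function.Surjective
      ((Pi.evalAddMonoidHom (fun _ : G.edgeSet => A) e₀).comp (Theta A G).subtype)
    ∧ ∃ s : A →+ Theta A G,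
        ((Pi.evalAddMonoidHom (fun _ : G.edgeSet => A) e₀).comp
          (Theta A G).subtype).comp s = AddMonoidHom.id A := by
  obtain ⟨u, c, hc⟩ :=
    SimpleGraph.exists_closed_walk_alternatingChain_apply_self (A := A) e₀ hdel.preconnected
  have heven : Even c.length :=
    ((SimpleGraph.Coloring.mk side fun h => hbip h).even_length_iff_congr c).2 Iff.rfl
  let s : A →+ Theta A G := c.alternatingChain.codRestrict _ (c.alternatingChain_mem_Theta heven)
  have hs : ((Pi.evalAddMonoidHom (fun _ : G.edgeSet => A) e₀).comp
      (Theta A G).subtype).comp s = AddMonoidHom.id A := AddMonoidHom.ext hc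
  exact ⟨fun b => ⟨s b, DFunLike.congr_fun hs b⟩, s, hs⟩

/-- **Lemme 1.2 (i).** Let `Γ` be a finite connected bipartite graph and `e₀` an edge whose
deletion keeps the graph connected.  Then the restriction to `Θ_A(Γ)` of the projection
`p_{e₀} : ⊕_{e ∈ E} A → A` is a split surjective group homomorphism. -/
theorem stmt_1 {A : Type*} [AddCommGroup A] {V : Type*} [Fintype V]
    (G : SimpleGraph V) (hconn : G.Connected)
    (side : V → Bool)
    (hbip : ∀ ⦃v w : V⦄, G.Adj v w → side v ≠ side w)
    (e₀ : G.edgeSet)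
    (hdel : (G.deleteEdges {(e₀ : Sym2 V)}).Connected) :
    Function.Surjective
      ((Pi.evalAddMonoidHom (fun _ : G.edgeSet => A) e₀).comp (Theta A G).subtype)
    ∧ ∃ s : A →+ Theta A G,
        ((Pi.evalAddMonoidHom (fun _ : G.edgeSet => A) e₀).comp
          (Theta A G).subtype).comp s = AddMonoidHom.id A :=
  stmt_1_general G side hbip e₀ hdel
end
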